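/- arXiv:1401.3251 — 5 statements merged into one kernel-verified Lean document; each statement's English description precedes it below -/
import Mathlib

section
/- For every proper coloring c of a graph G, there exists an induced subgraph H of G containing exactly one vertex from each color class of c such that the discrepancy of c equals |c(H)| - χ(H). -/
open SimpleGraph

noncomputable def chi {W : Type*} (G : SimpleGraph W) : ℕ := G.chromaticNumber.toNat

def IsProper {W : Type*} (G : SimpleGraph W) (c : W → ℕ) : Prop :=
  ∀ ⦃u v⦄, G.Adj u v → c u ≠ c v

noncomputable def disc {W : Type*} (G : SimpleGraph W) (c : W → ℕ) (s : Finset W) : ℕ :=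
  (s.image c).card - chi (G.induce (s : Set W))

noncomputable def phiC {W : Type*} [Fintype W] (G : SimpleGraph W) (c : W → ℕ) : ℕ :=
  Finset.univ.sup (disc G c)

noncomputable def phi {W : Type*} [Fintype W] (G : SimpleGraph W) : ℕ :=
  sInf {n | ∃ c, IsProper G c ∧ phiC G c = n}

open Classical in
noncomputable def phiHatC {W : Type*} [Fintype W] (G : SimpleGraph W) (c : W → ℕ) : ℕ :=
  Finset.univ.sup (fun s : Finset W =>
    if (G.induce (s : Set W)).Connected then disc G c s else 0)

noncomputable def phiHat {W : Type*} [Fintype W] (G : SimpleGraph W) : ℕ :=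
  sInf {n | ∃ c, IsProper G c ∧ phiHatC G c = n}

open Classical in
noncomputable def indepNum' {W : Type*} [Fintype W] (G : SimpleGraph W) : ℕ :=
  Finset.univ.sup fun s : Finset W =>
    if ∀ u ∈ s, ∀ v ∈ s, ¬ G.Adj u v then s.card else 0

open Classical in
noncomputable def cliqueNum' {W : Type*} [Fintype W] (G : SimpleGraph W) : ℕ :=
  Finset.univ.sup fun s : Finset W =>
    if G.IsClique (s : Set W) then s.card else 0

/- Take a vertex set t of maximal discrepancy. Keep one vertex of t of each colour that t uses
and add one vertex of each remaining colour. The result s meets every colour class exactly once,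
and adding a vertex raises the chromatic number by at most one, so
χ(s) ≤ χ(t) + (|c(V)| - |c(t)|): the discrepancy of s is at least that of t. -/
open Finset

section Chromatic

variable {V : Type*} (G : SimpleGraph V)

lemma chi_le_of_colorable {n : ℕ} (h : G.Colorable n) : chi G ≤ n :=
  ENat.toNat_le_of_le_natCast h.chromaticNumber_le

lemma colorable_chi [Finite V] : G.Colorable (chi G) :=
  G.colorable_chromaticNumber_of_fintype

lemma chi_induce_mono {A B : Set V} [Finite B] (h : A ⊆ B) :
    chi (G.induce A) ≤ chi (G.induce B) :=
  chi_le_of_colorable _ ((colorable_chi _).of_hom (G.induceHomOfLE h).toHom)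

lemma colorable_induce_insert {A : Set V} {n : ℕ} (v : V) (h : (G.induce A).Colorable n) :
    (G.induce (insert v A)).Colorable (n + 1) := by
  classical
  obtain ⟨C⟩ := h
  let C' : (G.induce (insert v A)).Coloring (Option (Fin n)) :=
    Coloring.mk (fun x => if hx : x.1 ∈ A then some (C ⟨x, hx⟩) else none) <| by
      rintro ⟨x, hx⟩ ⟨y, hy⟩ hxy
      by_cases hxA : x ∈ A <;> by_cases hyA : y ∈ A <;>
        simp only [hxA, hyA, dite_true, dite_false]
      · have hxy' : (G.induce A).Adj ⟨x, hxA⟩ ⟨y, hyA⟩ := hxy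
        exact fun h => C.valid hxy' (Option.some_injective _ h)
      · simp
      · simp
      · obtain rfl : x = v := hx.resolve_right hxA
        obtain rfl : y = x := hy.resolve_right hyA
        exact absurd hxy (G.induce _).irrefl
  simpa using C'.colorable

lemma colorable_induce_union {A : Set V} {n : ℕ} (B : Finset V) (h : (G.induce A).Colorable n) :
    (G.induce (A ∪ B)).Colorable (n + #B) := by
  classical
  induction B using Finset.induction_on with
  | empty => convert h using 2 <;> simp
  | insert v B hv ih =>
    rw [coe_insert, Set.union_insert, card_insert_of_notMem hv, ← add_assoc]
    exact colorable_induce_insert G v ih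

lemma chi_induce_union_le [DecidableEq V] (A B : Finset V) :
    chi (G.induce (↑(A ∪ B) : Set V)) ≤ chi (G.induce (A : Set V)) + #B := by
  rw [coe_union]
  exact chi_le_of_colorable _ (colorable_induce_union G B (colorable_chi _))

end Chromatic

lemma card_filter_eq_one_of_injOn {α β : Type*} [DecidableEq β] {f : α → β} {s : Finset α}
    (hf : Set.InjOn f s) {b : β} (hb : b ∈ s.image f) [DecidablePred fun a => f a = b] :
    #(s.filter fun a => f a = b) = 1 := by
  obtain ⟨a, ha, rfl⟩ := mem_image.mp hb
  rw [card_eq_one]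
  refine ⟨a, eq_singleton_iff_unique_mem.mpr ⟨mem_filter.mpr ⟨ha, rfl⟩, fun x hx => ?_⟩⟩
  obtain ⟨hxs, hfx⟩ := mem_filter.mp hx
  exact hf hxs ha hfx

lemma exists_injOn_image_eq_univ_disc_le {V : Type*} [Fintype V] [DecidableEq V]
    (G : SimpleGraph V) (c : V → ℕ) (t : Finset V) :
    ∃ s : Finset V, Set.InjOn c s ∧ s.image c = univ.image c ∧ disc G c t ≤ disc G c s := by
  set K := univ.image c
  obtain ⟨r, hrt, hr_inj, hr⟩ :=
    exists_subset_injOn_image_eq_of_surjOn (f := c) (t : Set V) (t.image c)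
      (by rw [coe_image]; exact Set.surjOn_image c t)
  obtain ⟨u, -, hu_inj, hu⟩ := exists_subset_injOn_image_eq_of_surjOn Set.univ (K \ t.image c)
    fun k hk => by simpa [K] using (mem_sdiff.mp hk).1
  have htK : t.image c ⊆ K := image_subset_image (subset_univ t)
  have hu_card : #u = #K - #(t.image c) := by
    rw [← card_image_of_injOn hu_inj, hu, card_sdiff_of_subset htK]
  have htK_card := card_le_card htK
  have himage : (r ∪ u).image c = K := by
    rw [image_union, hr, hu, union_sdiff_of_subset htK]
  have hr_card : #r = #(t.image c) := by rw [← card_image_of_injOn hr_inj, hr]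
  refine ⟨r ∪ u, ?_, himage, ?_⟩
  · refine injOn_of_card_image_eq (le_antisymm card_image_le ?_)
    calc #(r ∪ u) ≤ #r + #u := card_union_le r u
      _ = #((r ∪ u).image c) := by rw [himage]; omega
  · have hchi : chi (G.induce (↑(r ∪ u) : Set V)) ≤ chi (G.induce (t : Set V)) + #u :=
      (chi_induce_union_le G r u).trans
        (Nat.add_le_add_right (chi_induce_mono G (coe_subset.mpr hrt)) _)
    unfold disc
    rw [himage]
    omega

open Classical in
theorem stmt0_general {V : Type*} [Fintype V] (G : SimpleGraph V) (c : V → ℕ) :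
    ∃ s : Finset V,
      (∀ k ∈ Finset.univ.image c, (s.filter fun v => c v = k).card = 1) ∧
      phiC G c = disc G c s := by
  obtain ⟨t, -, ht⟩ := exists_mem_eq_sup (univ : Finset (Finset V)) univ_nonempty (disc G c)
  obtain ⟨s, hinj, himage, hts⟩ := exists_injOn_image_eq_univ_disc_le G c t
  refine ⟨s, fun k hk => card_filter_eq_one_of_injOn hinj (himage ▸ hk), ?_⟩
  exact le_antisymm (ht.trans_le hts) (le_sup (mem_univ s))

open Classical in
theorem stmt0 {V : Type*} [Fintype V] (G : SimpleGraph V) (c : V → ℕ)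
    (hc : IsProper G c) :
    ∃ s : Finset V,
      (∀ k ∈ Finset.univ.image c, (s.filter fun v => c v = k).card = 1) ∧
      phiC G c = disc G c s :=
  stmt0_general G c
end

section
/- If I is an independent set in a graph G, then φ(G) ≤ φ(G \ I) + 1, where G \ I denotes the subgraph induced on V(G) - I. -/
open SimpleGraph

/-!
Take an optimal proper colouring of `G \ I`, shift all its colours up by one and give every
vertex of `I` the fresh colour `0`; this is proper because `I` is independent. For any vertex set
`s`, the colours used on `s` are those used on `s \ I` plus possibly `0`, while `χ(G[s])` is at
least `χ(G[s \ I])`, so every discrepancy grows by at most one.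
-/

section Coloring

variable {V : Type*}

lemma chi_le_chi_of_embedding {W W' : Type*} [Fintype W'] {G : SimpleGraph W}
    {G' : SimpleGraph W'} (f : G ↪g G') : chi G ≤ chi G' :=
  ENat.toNat_le_toNat (chromaticNumber_mono_of_hom f.toHom)
    (chromaticNumber_ne_top_iff_exists.mpr ⟨_, G'.colorable_of_fintype⟩)

lemma exists_isProper [Fintype V] (G : SimpleGraph V) : ∃ c, IsProper G c :=
  ⟨fun v => Fintype.equivFin V v, fun _ _ huv h =>
    G.ne_of_adj huv ((Fintype.equivFin V).injective (Fin.val_injective h))⟩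

lemma phi_le_phiC [Fintype V] {G : SimpleGraph V} {c : V → ℕ} (hc : IsProper G c) :
    phi G ≤ phiC G c :=
  Nat.sInf_le ⟨c, hc, rfl⟩

lemma exists_isProper_phiC_eq_phi [Fintype V] (G : SimpleGraph V) :
    ∃ c, IsProper G c ∧ phiC G c = phi G :=
  let ⟨c, hc⟩ := exists_isProper G
  Nat.sInf_mem (s := {n | ∃ c, IsProper G c ∧ phiC G c = n}) ⟨_, c, hc, rfl⟩

section ExtendColoring

variable (S : Set V) [DecidablePred (· ∈ S)]

def extendColoring (c : S → ℕ) (v : V) : ℕ :=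
  if h : v ∈ S then c ⟨v, h⟩ + 1 else 0

variable {S}

lemma isProper_extendColoring {G : SimpleGraph V} (hS : G.IsIndepSet Sᶜ) {c : S → ℕ}
    (hc : IsProper (G.induce S) c) : IsProper G (extendColoring S c) := by
  intro u v huv
  by_cases hu : u ∈ S <;> by_cases hv : v ∈ S
  · simpa [extendColoring, hu, hv] using hc (u := ⟨u, hu⟩) (v := ⟨v, hv⟩) huv
  · simp [extendColoring, hu, hv]
  · simp [extendColoring, hu, hv]
  · exact absurd huv (hS hu hv (G.ne_of_adj huv))

lemma card_image_extendColoring_le (c : S → ℕ) (s : Finset V) :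
    (s.image (extendColoring S c)).card ≤ ((s.subtype (· ∈ S)).image c).card + 1 := by
  have hsub : s.image (extendColoring S c) ⊆
      insert 0 (((s.subtype (· ∈ S)).image c).image (· + 1)) := by
    simp only [Finset.subset_iff, Finset.mem_image, Finset.mem_insert, Finset.mem_subtype,
      forall_exists_index, and_imp]
    rintro _ v hvs rfl
    by_cases hv : v ∈ S
    · exact Or.inr ⟨c ⟨v, hv⟩, ⟨⟨v, hv⟩, hvs, rfl⟩, by simp [extendColoring, hv]⟩
    · simp [extendColoring, hv]
  calc (s.image (extendColoring S c)).card
      ≤ (insert 0 (((s.subtype (· ∈ S)).image c).image (· + 1))).card := Finset.card_le_card hsub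
    _ ≤ (((s.subtype (· ∈ S)).image c).image (· + 1)).card + 1 := Finset.card_insert_le _ _
    _ ≤ ((s.subtype (· ∈ S)).image c).card + 1 := Nat.add_le_add_right Finset.card_image_le 1

lemma chi_induce_subtype_le (G : SimpleGraph V) (s : Finset V) :
    chi ((G.induce S).induce (s.subtype (· ∈ S) : Set S)) ≤ chi (G.induce (s : Set V)) :=
  chi_le_chi_of_embedding
    ⟨⟨fun x => ⟨x.1.1, Finset.mem_subtype.mp x.2⟩,
      fun _ _ h => Subtype.ext (Subtype.ext (Subtype.mk_eq_mk.mp h))⟩, Iff.rfl⟩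

lemma disc_extendColoring_le (G : SimpleGraph V) (c : S → ℕ) (s : Finset V) :
    disc G (extendColoring S c) s ≤ disc (G.induce S) c (s.subtype (· ∈ S)) + 1 := by
  have hcard := card_image_extendColoring_le c s
  have hchi := chi_induce_subtype_le (S := S) G s
  unfold disc
  omega

lemma phiC_extendColoring_le [Fintype V] [Fintype S] (G : SimpleGraph V) (c : S → ℕ) :
    phiC G (extendColoring S c) ≤ phiC (G.induce S) c + 1 :=
  Finset.sup_le fun s _ => (disc_extendColoring_le G c s).trans
    (Nat.add_le_add_right (Finset.le_sup (Finset.mem_univ _)) 1)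

end ExtendColoring

end Coloring

theorem stmt1 {V : Type*} [Fintype V] [DecidableEq V] (G : SimpleGraph V) (I : Finset V)
    (hI : ∀ u ∈ I, ∀ v ∈ I, ¬ G.Adj u v) :
    phi G ≤ phi (G.induce ((Iᶜ : Finset V) : Set V)) + 1 := by
  have hindep : G.IsIndepSet ((Iᶜ : Finset V) : Set V)ᶜ := fun u hu v hv _ =>
    hI u (by simpa using hu) v (by simpa using hv)
  obtain ⟨c, hc, hphi⟩ := exists_isProper_phiC_eq_phi (G.induce ((Iᶜ : Finset V) : Set V))
  calc phi G ≤ phiC G (extendColoring _ c) := phi_le_phiC (isProper_extendColoring hindep hc)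
    _ ≤ phi (G.induce ((Iᶜ : Finset V) : Set V)) + 1 := hphi ▸ phiC_extendColoring_le G c
end

section
/- For any graph G on n vertices, φ(G) ≤ n/3. -/
/-!
Peel off independent triples one at a time, each as its own colour class. A colour class meets
any induced subgraph `H` in at most one vertex, so each triple raises `|c(H)| - χ(H)` by at most
one, a third per vertex removed. What remains has no independent triple; there peel off
non-adjacent pairs until a clique `U` remains, whose vertices get distinct colours. If `m` pairs
were removed and `H` meets `U` in `k` vertices, then `|c(H)| ≤ k + m`, `χ(H) ≥ k` and
`χ(H) ≥ |H| / 2 ≥ |c(H)| / 2`, which together give `3 (|c(H)| - χ(H)) ≤ 2m + |U|`.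
-/

open SimpleGraph

namespace SimpleGraph

variable {V W : Type*} {G : SimpleGraph V}

lemma chi_le_of_colorable {n : ℕ} (h : G.Colorable n) : chi G ≤ n :=
  ENat.toNat_le_of_le_natCast h.chromaticNumber_le

lemma colorable_chi [Finite V] (G : SimpleGraph V) : G.Colorable (chi G) :=
  G.colorable_chromaticNumber_of_fintype

lemma chi_le_of_hom [Finite W] {G' : SimpleGraph W} (f : G →g G') : chi G ≤ chi G' :=
  chi_le_of_colorable ((colorable_chi G').of_hom f)

lemma chi_induce_mono {s t : Finset V} (h : s ⊆ t) :
    chi (G.induce (s : Set V)) ≤ chi (G.induce (t : Set V)) :=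
  chi_le_of_hom (G.induceHomOfLE (Finset.coe_subset.mpr h)).toHom

lemma IsClique.card_le_chi_induce {s U : Finset V} (hU : U ⊆ s) (h : G.IsClique (U : Set V)) :
    U.card ≤ chi (G.induce (s : Set V)) := by
  simpa using (colorable_chi (G.induce (s : Set V))).card_le_of_pairwise_adj
    (fun x : U => (⟨x, hU x.2⟩ : (s : Set V)))
    fun x y hxy => h x.2 y.2 (Subtype.coe_ne_coe.mpr hxy)

lemma card_le_mul_chi_induce_of_indepSetFreeOn {s : Finset V} {k : ℕ}
    (h : G.IndepSetFreeOn s (k + 1)) : s.card ≤ k * chi (G.induce (s : Set V)) := by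
  classical
  obtain ⟨C⟩ := colorable_chi (G.induce (s : Set V))
  have hfibre : ∀ i, ({x | C x = i} : Finset (s : Set V)).card ≤ k := by
    intro i
    by_contra! hk
    obtain ⟨F, hF, hFcard⟩ := Finset.exists_subset_card_eq hk
    refine h (t := F.map (Function.Embedding.subtype _)) ?_ ⟨?_, by simpa using hFcard⟩
    · simp only [Finset.coe_map, Function.Embedding.coe_subtype]
      rintro _ ⟨x, -, rfl⟩
      exact x.2
    · simp only [Finset.coe_map, Function.Embedding.coe_subtype]
      rintro _ ⟨x, hx, rfl⟩ _ ⟨y, hy, rfl⟩ - hxy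
      have hx' := (Finset.mem_filter.mp (hF hx)).2
      have hy' := (Finset.mem_filter.mp (hF hy)).2
      exact C.valid (G := G.induce (s : Set V)) hxy (hx'.trans hy'.symm)
  simpa using Finset.card_le_mul_card_image_of_maps_to (t := Finset.univ)
    (fun x _ => Finset.mem_univ (C x)) k fun i _ => hfibre i

def IsProperOn (G : SimpleGraph V) (t : Finset V) (c : V → ℕ) : Prop :=
  ∀ ⦃u⦄, u ∈ t → ∀ ⦃v⦄, v ∈ t → G.Adj u v → c u ≠ c v

variable [DecidableEq V]

def consClass (I : Finset V) (c : V → ℕ) : V → ℕ :=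
  fun w => if w ∈ I then 0 else c w + 1

lemma IsProperOn.consClass {t I : Finset V} {c : V → ℕ} (hc : G.IsProperOn (t \ I) c)
    (hI : G.IsIndepSet (I : Set V)) : G.IsProperOn t (consClass I c) := by
  intro u hu v hv huv
  by_cases huI : u ∈ I <;> by_cases hvI : v ∈ I <;>
    simp only [SimpleGraph.consClass, huI, hvI, if_true, if_false, ne_eq, Nat.add_right_cancel_iff]
  · exact fun _ => hI huI hvI (G.ne_of_adj huv) huv
  · exact (Nat.succ_ne_zero _).symm
  · exact Nat.succ_ne_zero _
  · exact hc (Finset.mem_sdiff.mpr ⟨hu, huI⟩) (Finset.mem_sdiff.mpr ⟨hv, hvI⟩) huv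

lemma card_image_consClass_le (I s : Finset V) (c : V → ℕ) :
    (s.image (consClass I c)).card ≤ ((s \ I).image c).card + 1 := by
  have hsub :
      s.image (consClass I c) ⊆ insert 0 (((s \ I).image c).image (fun n : ℕ => n + 1)) := by
    intro x hx
    obtain ⟨w, hw, rfl⟩ := Finset.mem_image.mp hx
    by_cases hwI : w ∈ I
    · simp [SimpleGraph.consClass, hwI]
    · simp only [SimpleGraph.consClass, hwI, if_false]
      exact Finset.mem_insert_of_mem (Finset.mem_image_of_mem _
        (Finset.mem_image_of_mem _ (Finset.mem_sdiff.mpr ⟨hw, hwI⟩)))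
  calc (s.image (consClass I c)).card
      ≤ (((s \ I).image c).image (fun n : ℕ => n + 1)).card + 1 :=
        (Finset.card_le_card hsub).trans (Finset.card_insert_le _ _)
    _ ≤ ((s \ I).image c).card + 1 := Nat.add_le_add_right Finset.card_image_le 1

variable [Fintype V]

lemma exists_isProperOn_pairs_and_clique (G : SimpleGraph V) (t : Finset V) :
    ∃ (c : V → ℕ) (U : Finset V) (m : ℕ), U ⊆ t ∧ G.IsClique (U : Set V) ∧
      t.card = 2 * m + U.card ∧ G.IsProperOn t c ∧
      ∀ s ⊆ t, (s.image c).card ≤ (s ∩ U).card + m := by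
  induction t using Finset.strongInductionOn with
  | _ t ih =>
  by_cases hclique : G.IsClique (t : Set V)
  · refine ⟨fun v => Fintype.equivFin V v, t, 0, subset_rfl, hclique, by simp, ?_, ?_⟩
    · exact fun u _ v _ huv h => G.ne_of_adj huv ((Fintype.equivFin V).injective (Fin.ext h))
    · intro s hs
      simpa [Finset.inter_eq_left.mpr hs] using Finset.card_image_le
  obtain ⟨⟨u, hu⟩, ⟨v, hv⟩, huv, hnadj⟩ := (G.not_isClique_iff).mp hclique
  have huv' : u ≠ v := fun h => huv (Subtype.ext h)
  set I : Finset V := {u, v}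
  have hIt : I ⊆ t := Finset.insert_subset hu (Finset.singleton_subset_iff.mpr hv)
  have hI : G.IsIndepSet (I : Set V) := by
    rw [isIndepSet_iff, Finset.coe_pair, Set.pairwise_pair]
    exact fun _ => ⟨hnadj, fun h => hnadj h.symm⟩
  obtain ⟨c, U, m, hUt, hU, hcard, hc, hbound⟩ :=
    ih (t \ I) (Finset.sdiff_ssubset hIt (Finset.insert_nonempty u {v}))
  refine ⟨consClass I c, U, m + 1, hUt.trans Finset.sdiff_subset, hU, ?_, hc.consClass hI, ?_⟩
  · have hsplit := Finset.card_sdiff_add_card_eq_card hIt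
    rw [Finset.card_pair huv'] at hsplit
    omega
  · intro s hs
    have hrest := hbound (s \ I) (Finset.sdiff_subset_sdiff hs subset_rfl)
    have hinter : ((s \ I) ∩ U).card ≤ (s ∩ U).card :=
      Finset.card_le_card (Finset.inter_subset_inter_right Finset.sdiff_subset)
    have hcons := card_image_consClass_le I s c
    omega

lemma exists_isProperOn_of_indepSetFreeOn {t : Finset V} (ht : G.IndepSetFreeOn t 3) :
    ∃ c, G.IsProperOn t c ∧
      ∀ s ⊆ t, 3 * (s.image c).card ≤ 3 * chi (G.induce (s : Set V)) + t.card := by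
  obtain ⟨c, U, m, -, hU, hcard, hc, hbound⟩ := exists_isProperOn_pairs_and_clique G t
  refine ⟨c, hc, fun s hs => ?_⟩
  have hcolors := hbound s hs
  have hclique : (s ∩ U).card ≤ chi (G.induce (s : Set V)) :=
    (hU.subset (Finset.coe_subset.mpr Finset.inter_subset_right)).card_le_chi_induce
      Finset.inter_subset_left
  have hhalf := card_le_mul_chi_induce_of_indepSetFreeOn (k := 2)
    fun I hI => ht (hI.trans (Finset.coe_subset.mpr hs))
  have hcolors_le : (s.image c).card ≤ s.card := Finset.card_image_le
  have hinter_le : (s ∩ U).card ≤ U.card := Finset.card_le_card Finset.inter_subset_right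
  -- with `x` colours on `s`, `2 (x - χ) ≤ |s ∩ U| + m ≤ |U| + m` and `x - χ ≤ m`
  omega

lemma exists_isProperOn_three_mul_card_image_le (G : SimpleGraph V) (t : Finset V) :
    ∃ c, G.IsProperOn t c ∧
      ∀ s ⊆ t, 3 * (s.image c).card ≤ 3 * chi (G.induce (s : Set V)) + t.card := by
  induction t using Finset.strongInductionOn with
  | _ t ih =>
  by_cases ht : G.IndepSetFreeOn t 3
  · exact exists_isProperOn_of_indepSetFreeOn ht
  obtain ⟨I, hIt, hI⟩ : ∃ I : Finset V, (I : Set V) ⊆ t ∧ G.IsNIndepSet 3 I := by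
    simpa [IndepSetFreeOn] using ht
  have hIt : I ⊆ t := Finset.coe_subset.mp hIt
  obtain ⟨c, hc, hbound⟩ :=
    ih (t \ I) (Finset.sdiff_ssubset hIt (Finset.card_pos.mp (by rw [hI.card_eq]; norm_num)))
  refine ⟨consClass I c, hc.consClass hI.isIndepSet, fun s hs => ?_⟩
  have hrest := hbound (s \ I) (Finset.sdiff_subset_sdiff hs subset_rfl)
  have hchi := chi_induce_mono (G := G) (Finset.sdiff_subset (s := s) (t := I))
  have hcons := card_image_consClass_le I s c
  have hsplit := Finset.card_sdiff_add_card_eq_card hIt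
  rw [hI.card_eq] at hsplit
  omega

end SimpleGraph

theorem stmt7 {V : Type*} [Fintype V] (G : SimpleGraph V) :
    (phi G : ℝ) ≤ (Fintype.card V : ℝ) / 3 := by
  classical
  obtain ⟨c, hc, hbound⟩ := G.exists_isProperOn_three_mul_card_image_le Finset.univ
  have hproper : IsProper G c := fun u v huv => hc (Finset.mem_univ u) (Finset.mem_univ v) huv
  have hphiC : 3 * phiC G c ≤ Fintype.card V := by
    rw [phiC, Finset.mul_sup₀]
    refine Finset.sup_le fun s _ => ?_
    have hs := hbound s (Finset.subset_univ s)
    rw [Finset.card_univ] at hs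
    rw [disc]
    omega
  have hphi : phi G ≤ phiC G c := Nat.sInf_le ⟨c, hproper, rfl⟩
  rw [le_div_iff₀ (by norm_num : (0 : ℝ) < 3)]
  exact_mod_cast (by omega : phi G * 3 ≤ Fintype.card V)
end

section
/- If G is an odd cycle of length at least 9, then φ(G) = 2. -/
open SimpleGraph

/-!
A proper 3-colouring of the cycle gives `φ ≤ 2`: it shows at most three colours on any nonempty
vertex set, whose induced subgraph needs at least one colour. Conversely, for a proper colouring
`c` of an odd cycle, `c v = c (v + 2)` cannot hold for all `v`, because `2` generates `ℤ/n`.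
Starting from a vertex `v` with `c v ≠ c (v + 2)`, the path `v, v + 1, …, v + 7` has no chords
(as `n ≥ 9`) and always contains three vertices, pairwise at distance at least `2`, with three
distinct colours; this independent set shows `φ_c ≥ 3 - 1`.
-/

section Discrepancy

variable {W : Type*} {G : SimpleGraph W} {c : W → ℕ}

lemma one_le_chi_induce {s : Finset W} (hs : s.Nonempty) : 1 ≤ chi (G.induce (s : Set W)) := by
  have : Nonempty (s : Set W) := hs.coe_sort
  have hcol := (G.induce (s : Set W)).colorable_of_fintype
  exact ENat.toNat_pos hcol.chromaticNumber_pos.ne'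
    (chromaticNumber_ne_top_iff_exists.2 ⟨_, hcol⟩)

lemma chi_induce_le_one_of_isIndepSet {s : Set W} (hs : G.IsIndepSet s) :
    chi (G.induce s) ≤ 1 := by
  have hbot : G.induce s = ⊥ := by
    ext u v
    simpa using fun h => hs u.2 v.2 (Subtype.coe_ne_coe.2 ((G.induce s).ne_of_adj h)) h
  exact ENat.toNat_le_of_le_natCast (colorable_one_iff.2 hbot).chromaticNumber_le

lemma disc_le_card_image_sub_one (s : Finset W) : disc G c s ≤ (s.image c).card - 1 := by
  rcases s.eq_empty_or_nonempty with rfl | hs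
  · simp [disc]
  · have := one_le_chi_induce (G := G) hs
    unfold disc
    omega

lemma card_image_sub_one_le_disc {s : Finset W} (hs : G.IsIndepSet s) :
    (s.image c).card - 1 ≤ disc G c s := by
  have := chi_induce_le_one_of_isIndepSet hs
  unfold disc
  omega

variable [Fintype W]

lemma phiC_le_of_forall_lt {k : ℕ} (hc : ∀ v, c v < k) : phiC G c ≤ k - 1 :=
  Finset.sup_le fun s _ => (disc_le_card_image_sub_one s).trans <| Nat.sub_le_sub_right
    ((Finset.card_le_card (t := Finset.range k) (by simp [Finset.subset_iff, hc])).trans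
      (Finset.card_range k).le) 1

lemma card_image_sub_one_le_phiC {s : Finset W} (hs : G.IsIndepSet s) :
    (s.image c).card - 1 ≤ phiC G c :=
  (card_image_sub_one_le_disc hs).trans (Finset.le_sup (Finset.mem_univ s))

lemma phi_eq_of_le_of_forall_le {m : ℕ} (hc : IsProper G c) (hcm : phiC G c ≤ m)
    (h : ∀ c', IsProper G c' → m ≤ phiC G c') : phi G = m := by
  have hmem : phiC G c ∈ {n | ∃ c, IsProper G c ∧ phiC G c = n} := ⟨c, hc, rfl⟩
  refine le_antisymm ((Nat.sInf_le hmem).trans hcm) (le_csInf ⟨_, hmem⟩ ?_)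
  rintro _ ⟨c', hc', rfl⟩
  exact h c' hc'

end Discrepancy

def cycleThreeColoring (n : ℕ) (v : Fin n) : ℕ := if v.val = n - 1 then 2 else v.val % 2

lemma cycleThreeColoring_lt_three (n : ℕ) (v : Fin n) : cycleThreeColoring n v < 3 := by
  unfold cycleThreeColoring
  split_ifs <;> omega

lemma cycleThreeColoring_ne_of_val_sub_eq_one {n : ℕ} {u v : Fin n} (h : (v - u).val = 1) :
    cycleThreeColoring n u ≠ cycleThreeColoring n v := by
  have hv : v.val = u.val + 1 ∨ (v.val = 0 ∧ u.val = n - 1) := by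
    rcases le_or_gt u v with huv | huv
    · rw [Fin.coe_sub_iff_le.2 huv] at h
      omega
    · rw [Fin.coe_sub_iff_lt.2 huv] at h
      omega
  unfold cycleThreeColoring
  split_ifs <;> omega

lemma isProper_cycleThreeColoring (n : ℕ) : IsProper (cycleGraph n) (cycleThreeColoring n) := by
  intro u v huv
  rcases cycleGraph_adj'.1 huv with h | h
  · exact (cycleThreeColoring_ne_of_val_sub_eq_one h).symm
  · exact cycleThreeColoring_ne_of_val_sub_eq_one h

lemma exists_rainbow_spread_triple {a : ℕ → ℕ} (hadj : ∀ i, a i ≠ a (i + 1))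
    (h02 : a 0 ≠ a 2) :
    ∃ i j k, i + 2 ≤ j ∧ j + 2 ≤ k ∧ k ≤ 7 ∧ a i ≠ a j ∧ a i ≠ a k ∧ a j ≠ a k := by
  by_contra! h
  have mem (k : ℕ) (hk : 4 ≤ k) (hk' : k ≤ 7) : a k = a 0 ∨ a k = a 2 := by
    by_contra! hne
    exact hne.2 (h 0 2 k (by omega) (by omega) hk' h02 hne.1.symm).symm
  have m4 := mem 4 le_rfl (by omega)
  have m7 := mem 7 (by omega) le_rfl
  -- a 4, ..., a 7 alternate between the two colours a 0 and a 2
  have h47 : a 4 ≠ a 7 := by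
    have m5 := mem 5 (by omega) (by omega)
    have m6 := mem 6 (by omega) (by omega)
    have : a 4 ≠ a 5 := hadj 4
    have : a 5 ≠ a 6 := hadj 5
    have : a 6 ≠ a 7 := hadj 6
    omega
  have : a 0 ≠ a 1 := hadj 0
  have : a 1 ≠ a 2 := hadj 1
  exact h47 (h 1 4 7 (by omega) (by omega) le_rfl (by omega) (by omega))

open Fin.NatCast Fin.CommRing

section CycleGraph

variable {n : ℕ} [NeZero n]

lemma cycleGraph_adj_add_one (hn : 1 < n) (v : Fin n) : (cycleGraph n).Adj v (v + 1) := by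
  rw [cycleGraph_adj']
  right
  simp [Nat.mod_eq_of_lt hn]

lemma cycleGraph_not_adj_add_natCast (v : Fin n) {i j : ℕ} (hij : i + 2 ≤ j)
    (hji : j + 2 ≤ i + n) : ¬ (cycleGraph n).Adj (v + i) (v + j) := by
  have hfwd : (v + j) - (v + i) = ((j - i : ℕ) : Fin n) := by
    rw [Nat.cast_sub (by omega)]; ring
  have hbwd : (v + i) - (v + j) = ((n - (j - i) : ℕ) : Fin n) := by
    rw [Nat.cast_sub (by omega), Fin.natCast_self, ← neg_sub, hfwd]; ring
  rw [cycleGraph_adj', hfwd, hbwd, Fin.val_natCast, Fin.val_natCast,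
    Nat.mod_eq_of_lt (by omega), Nat.mod_eq_of_lt (by omega)]
  omega

lemma exists_ne_add_two_of_odd (hn : 1 < n) (hodd : Odd n) {c : Fin n → ℕ}
    (hc : IsProper (cycleGraph n) c) : ∃ v : Fin n, c v ≠ c (v + 2) := by
  by_contra! h
  have hper : Function.Periodic (fun k : ℕ => c k) 2 := fun k => by
    simpa using (h k).symm
  obtain ⟨m, hm⟩ := hodd
  have h01 : c 1 = c 0 := by
    simpa [show (m + 1) * 2 = n + 1 by omega] using hper.nat_mul_eq (m + 1)
  exact hc (by simpa using cycleGraph_adj_add_one hn 0) h01.symm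

lemma exists_isIndepSet_card_image_eq_three (hn : 9 ≤ n) (hodd : Odd n)
    {c : Fin n → ℕ} (hc : IsProper (cycleGraph n) c) :
    ∃ s : Finset (Fin n), (cycleGraph n).IsIndepSet s ∧ (s.image c).card = 3 := by
  obtain ⟨v, hv⟩ := exists_ne_add_two_of_odd (by omega) hodd hc
  obtain ⟨i, j, k, hij, hjk, hk, hcij, hcik, hcjk⟩ := exists_rainbow_spread_triple
    (a := fun k : ℕ => c (v + k))
    (fun k => hc (by simpa [add_assoc] using cycleGraph_adj_add_one (by omega) (v + (k : Fin n))))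
    (by simpa using hv)
  refine ⟨{v + i, v + j, v + k}, ?_, ?_⟩
  · have nij := cycleGraph_not_adj_add_natCast v hij (by omega)
    have nik := cycleGraph_not_adj_add_natCast v (i := i) (j := k) (by omega) (by omega)
    have njk := cycleGraph_not_adj_add_natCast v hjk (by omega)
    simp [isIndepSet_iff, Set.pairwise_insert, (cycleGraph n).adj_comm, nij, nik, njk]
  · exact Finset.card_eq_three.2 ⟨_, _, _, hcij, hcik, hcjk, by simp [Finset.image_insert]⟩

end CycleGraph

theorem stmt16 (n : ℕ) (hn : 9 ≤ n) (hodd : Odd n) :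
    phi (SimpleGraph.cycleGraph n) = 2 := by
  have : NeZero n := ⟨by omega⟩
  refine phi_eq_of_le_of_forall_le (isProper_cycleThreeColoring n)
    (phiC_le_of_forall_lt (cycleThreeColoring_lt_three n)) fun c hc => ?_
  obtain ⟨s, hs, hcard⟩ := exists_isIndepSet_card_image_eq_three hn hodd hc
  have := card_image_sub_one_le_phiC (c := c) hs
  omega
end

section
/- For any graph G, there exists a complete coloring c of G such that φ_c(G) = φ(G). -/
/-!
Among the proper colorings attaining `φ(G)`, take one with the fewest colors. If two of its
color classes were joined by no edge, recoloring one class with the other's color would keep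
the coloring proper and use fewer colors; since every induced subgraph then sees at most as many
colors, `φ_c` would not increase, contradicting minimality.
-/

open SimpleGraph

namespace SimpleGraph

variable {W : Type*} (G : SimpleGraph W)

def IsCompleteColoring [Fintype W] (c : W → ℕ) : Prop :=
  ∀ k₁ ∈ Finset.univ.image c, ∀ k₂ ∈ Finset.univ.image c, k₁ ≠ k₂ →
    ∃ u v, G.Adj u v ∧ c u = k₁ ∧ c v = k₂

lemma isProper_of_injective {c : W → ℕ} (hc : Function.Injective c) : IsProper G c :=
  fun _ _ huv h => huv.ne (hc h)

lemma disc_comp_le (c : W → ℕ) (f : ℕ → ℕ) (s : Finset W) : disc G (f ∘ c) s ≤ disc G c s := by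
  unfold disc
  rw [← Finset.image_image]
  exact Nat.sub_le_sub_right Finset.card_image_le _

lemma phiC_comp_le [Fintype W] (c : W → ℕ) (f : ℕ → ℕ) : phiC G (f ∘ c) ≤ phiC G c :=
  Finset.sup_mono_fun fun s _ => disc_comp_le G c f s

lemma phi_le_phiC [Fintype W] {c : W → ℕ} (hc : IsProper G c) : phi G ≤ phiC G c :=
  Nat.sInf_le ⟨c, hc, rfl⟩

lemma exists_isProper_phiC_eq_phi [Fintype W] : ∃ c, IsProper G c ∧ phiC G c = phi G := by
  have hne : {n | ∃ c, IsProper G c ∧ phiC G c = n}.Nonempty :=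
    ⟨_, _, isProper_of_injective G (Fin.val_injective.comp (Fintype.equivFin W).injective), rfl⟩
  exact Nat.sInf_mem hne

def mergeColors (k₁ k₂ : ℕ) (x : ℕ) : ℕ := if x = k₂ then k₁ else x

lemma IsProper.mergeColors {c : W → ℕ} (hc : IsProper G c) {k₁ k₂ : ℕ}
    (hno : ∀ u v, G.Adj u v → c u = k₁ → c v ≠ k₂) : IsProper G (mergeColors k₁ k₂ ∘ c) := by
  intro u v huv heq
  simp only [Function.comp_apply, SimpleGraph.mergeColors] at heq
  split_ifs at heq with hu hv hv
  · exact hc huv (hu.trans hv.symm)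
  · exact hno v u huv.symm heq.symm hu
  · exact hno u v huv heq hv
  · exact hc huv heq

lemma card_image_mergeColors_lt [Fintype W] (c : W → ℕ) {k₁ k₂ : ℕ}
    (hk₁ : k₁ ∈ Finset.univ.image c) (hk₂ : k₂ ∈ Finset.univ.image c) (hne : k₁ ≠ k₂) :
    (Finset.univ.image (mergeColors k₁ k₂ ∘ c)).card < (Finset.univ.image c).card := by
  refine lt_of_le_of_lt (Finset.card_le_card ?_) (Finset.card_erase_lt_of_mem hk₂)
  rw [← Finset.image_image]
  intro x hx
  obtain ⟨y, hy, rfl⟩ := Finset.mem_image.mp hx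
  unfold SimpleGraph.mergeColors
  split_ifs with h
  · exact Finset.mem_erase.mpr ⟨hne, hk₁⟩
  · exact Finset.mem_erase.mpr ⟨h, hy⟩

lemma exists_isCompleteColoring_of_phiC_eq_phi [Fintype W] {c : W → ℕ} (hc : IsProper G c)
    (hphi : phiC G c = phi G) :
    ∃ c', IsProper G c' ∧ G.IsCompleteColoring c' ∧ phiC G c' = phi G := by
  induction h : (Finset.univ.image c).card using Nat.strong_induction_on generalizing c with
  | _ n ih =>
  by_cases hcomp : G.IsCompleteColoring c
  · exact ⟨c, hc, hcomp, hphi⟩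
  obtain ⟨k₁, hk₁, k₂, hk₂, hne, hno⟩ : ∃ k₁ ∈ Finset.univ.image c, ∃ k₂ ∈ Finset.univ.image c,
      k₁ ≠ k₂ ∧ ∀ u v, G.Adj u v → c u = k₁ → c v ≠ k₂ := by
    simpa [IsCompleteColoring] using hcomp
  have hc' := hc.mergeColors G hno
  have hphi' : phiC G (mergeColors k₁ k₂ ∘ c) = phi G :=
    le_antisymm (hphi ▸ phiC_comp_le G c _) (phi_le_phiC G hc')
  exact ih _ (h ▸ card_image_mergeColors_lt c hk₁ hk₂ hne) hc' hphi' rfl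

end SimpleGraph

theorem stmt19 {V : Type*} [Fintype V] (G : SimpleGraph V) :
    ∃ c : V → ℕ, IsProper G c ∧
      (∀ k₁ ∈ Finset.univ.image c, ∀ k₂ ∈ Finset.univ.image c, k₁ ≠ k₂ →
        ∃ u v, G.Adj u v ∧ c u = k₁ ∧ c v = k₂) ∧
      phiC G c = phi G := by
  obtain ⟨c, hc, hphi⟩ := G.exists_isProper_phiC_eq_phi
  exact G.exists_isCompleteColoring_of_phiC_eq_phi hc hphi
end
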